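/- arXiv:1712.09263 — 9 statements merged into one kernel-verified Lean document; each statement's English description precedes it below -/
import Mathlib

section
/- Under the Setup, for every y ∈ Y and every g ∈ V the commutator [y, g] lies in Z, and the subgroup YZ is a normal subgroup of V. -/
open scoped Pointwise

/-- Under the Setup (a finite group `V`, a subgroup `H` with a transversal
`X` of its right cosets, subgroups `Y, Z` with `Z ⊆ Z(V)`, `Y ⊆ Z(H)`, `Z ∩ Y = 1`,
`[X, Y] ⊆ Z`, and a linear character `lam : Z → ℂˣ`):
for every `y ∈ Y` and every `g ∈ V` the commutator `[y, g] = y⁻¹·g⁻¹·y·g` lies in `Z`,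
and the subgroup `YZ` is normal in `V`. -/
theorem commutator_Y_V_in_Z_and_YZ_normal
    {V : Type*} [Group V] [Fintype V]
    (H Y Z : Subgroup V) (X : Set V)
    -- `X` is a transversal of the right cosets of `H`: every `v ∈ V` is uniquely `h·x`
    (hXrep : ∀ v : V, ∃! p : ↥H × ↥X, (p.1 : V) * (p.2 : V) = v)
    -- (i) `Z ⊆ Z(V)`
    (hZcent : Z ≤ Subgroup.center V)
    -- (ii) `Y ⊆ Z(H)`
    (hYH : Y ≤ H)
    (hYcent : ∀ y ∈ Y, ∀ h ∈ H, y * h = h * y)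
    -- (iii) `Z ∩ Y = 1`
    (hZY : Z ⊓ Y = ⊥)
    -- the fixed linear character of `Z`
    (lam : Z →* ℂˣ)
    -- (iv) `[x, y] ∈ Z` for all `x ∈ X`, `y ∈ Y`
    (hXYZ : ∀ x ∈ X, ∀ y ∈ Y, x⁻¹ * y⁻¹ * x * y ∈ Z) :
    (∀ y ∈ Y, ∀ g : V, y⁻¹ * g⁻¹ * y * g ∈ Z) ∧
    (∀ g : V, ∀ v ∈ (Y : Set V) * (Z : Set V),
      g⁻¹ * v * g ∈ (Y : Set V) * (Z : Set V)) := by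
  have main : ∀ y ∈ Y, ∀ g : V, y⁻¹ * g⁻¹ * y * g ∈ Z := by
    intro y hy g
    obtain ⟨⟨h, x⟩, hp, -⟩ := hXrep g
    have hx : (x : V) ∈ X := x.2
    have hcomm : y * (h : V) = (h : V) * y := hYcent y hy h h.2
    have hconj : (h : V)⁻¹ * y * (h : V) = y := by
      rw [mul_assoc, hcomm, ← mul_assoc, inv_mul_cancel, one_mul]
    have hZ : (x : V)⁻¹ * y⁻¹ * x * y ∈ Z := hXYZ x hx y hy
    have hZ' : y⁻¹ * (x : V)⁻¹ * y * x ∈ Z := by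
      have := Z.inv_mem hZ
      simpa [mul_assoc] using this
    have hg : g = (h : V) * x := hp.symm
    rw [hg, show y⁻¹ * ((h : V) * x)⁻¹ * y * ((h : V) * x)
        = y⁻¹ * (x : V)⁻¹ * ((h : V)⁻¹ * y * (h : V)) * x by group, hconj]
    exact hZ'
  refine ⟨main, ?_⟩
  rintro g v ⟨y, hy, z, hz, rfl⟩
  have hc : y⁻¹ * g⁻¹ * y * g ∈ Z := main y hy g
  have hzc : z * g = g * z := (hZcent hz).comm g
  refine ⟨y, hy, (y⁻¹ * g⁻¹ * y * g) * z, Z.mul_mem hc hz, ?_⟩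
  calc y * (y⁻¹ * g⁻¹ * y * g * z) = g⁻¹ * y * g * z := by group
    _ = g⁻¹ * (y * z) * g := by
        rw [← mul_assoc g⁻¹ y z, mul_assoc (g⁻¹ * y) z g, hzc, ← mul_assoc]
end

section
/- Under the Setup, for all h ∈ H, x ∈ X, y ∈ Y and z ∈ Z, the conjugate (y·z)^{h·x} := (h·x)⁻¹·(y·z)·(h·x) lies in YZ, and λ̂((y·z)^{h·x}) = λ̂(y·z)·λ([y, x]). -/
open scoped Pointwise

/-- Under the Setup, for all `h ∈ H`, `x ∈ X`, `y ∈ Y` and `z ∈ Z`, the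
conjugate `(y·z)^{h·x} = (h·x)⁻¹·(y·z)·(h·x)` lies in `YZ`, and
`λ̂((y·z)^{h·x}) = λ̂(y·z)·λ([y, x])`. -/
theorem conjugate_of_lamhat
    {V : Type*} [Group V] [Fintype V]
    (H Y Z : Subgroup V) (X : Set V)
    (hXrep : ∀ v : V, ∃! p : ↥H × ↥X, (p.1 : V) * (p.2 : V) = v)
    (hZcent : Z ≤ Subgroup.center V)
    (hYH : Y ≤ H)
    (hYcent : ∀ y ∈ Y, ∀ h ∈ H, y * h = h * y)
    (hZY : Z ⊓ Y = ⊥)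
    (lam : Z →* ℂˣ)
    (hXYZ : ∀ x ∈ X, ∀ y ∈ Y, x⁻¹ * y⁻¹ * x * y ∈ Z)
    -- `W` is the subgroup `YZ` of `V`
    (W : Subgroup V)
    (hW : (W : Set V) = (Y : Set V) * (Z : Set V))
    -- `λ̂ : YZ → ℂˣ` is the unique homomorphism with `λ̂(y·z) = λ(z)`
    (lamhat : W →* ℂˣ)
    (hlamhat : ∀ (y z : V) (hy : y ∈ Y) (hz : z ∈ Z) (hm : y * z ∈ W),
      lamhat ⟨y * z, hm⟩ = lam ⟨z, hz⟩) :
    ∀ h₀ ∈ H, ∀ x ∈ X, ∀ y ∈ Y, ∀ z ∈ Z,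
      ((h₀ * x)⁻¹ * (y * z) * (h₀ * x) ∈ W) ∧
      (∀ (h₁ : (h₀ * x)⁻¹ * (y * z) * (h₀ * x) ∈ W) (h₂ : y * z ∈ W)
          (h₃ : y⁻¹ * x⁻¹ * y * x ∈ Z),
        lamhat ⟨(h₀ * x)⁻¹ * (y * z) * (h₀ * x), h₁⟩ =
          lamhat ⟨y * z, h₂⟩ * lam ⟨y⁻¹ * x⁻¹ * y * x, h₃⟩) := by
  intro h₀ hH x hx y hy z hz
  have h2 : ∀ v : V, z * v = v * z := fun v =>
    ((Subgroup.mem_center_iff.mp (hZcent hz)) v).symm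
  have h1 : h₀⁻¹ * y = y * h₀⁻¹ := (hYcent y hy h₀⁻¹ (H.inv_mem hH)).symm
  have hcZ : y⁻¹ * x⁻¹ * y * x ∈ Z := by
    have h' := Z.inv_mem (hXYZ x hx y hy)
    simpa [mul_assoc] using h'
  have key : (h₀ * x)⁻¹ * (y * z) * (h₀ * x) = y * (z * (y⁻¹ * x⁻¹ * y * x)) := by
    calc (h₀ * x)⁻¹ * (y * z) * (h₀ * x)
        = x⁻¹ * (h₀⁻¹ * y) * z * h₀ * x := by group
      _ = x⁻¹ * (y * h₀⁻¹) * z * h₀ * x := by rw [h1]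
      _ = x⁻¹ * y * (h₀⁻¹ * z) * h₀ * x := by group
      _ = x⁻¹ * y * (z * h₀⁻¹) * h₀ * x := by rw [← h2 h₀⁻¹]
      _ = x⁻¹ * y * (z * x) := by group
      _ = x⁻¹ * y * (x * z) := by rw [h2 x]
      _ = (x⁻¹ * y * x) * z := by group
      _ = z * (x⁻¹ * y * x) := (h2 _).symm
      _ = y * (z * (y⁻¹ * x⁻¹ * y * x)) := by
          rw [show y * (z * (y⁻¹ * x⁻¹ * y * x)) = (y * z) * (y⁻¹ * x⁻¹ * y * x) by group,
            ← h2 y]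
          group
  have hzcZ : z * (y⁻¹ * x⁻¹ * y * x) ∈ Z := Z.mul_mem hz hcZ
  have hmW : y * (z * (y⁻¹ * x⁻¹ * y * x)) ∈ W := by
    rw [← SetLike.mem_coe, hW]
    exact Set.mul_mem_mul hy hzcZ
  refine ⟨key ▸ hmW, ?_⟩
  intro h₁ h₂ h₃
  have e1 : (⟨(h₀ * x)⁻¹ * (y * z) * (h₀ * x), h₁⟩ : W)
      = ⟨y * (z * (y⁻¹ * x⁻¹ * y * x)), hmW⟩ := Subtype.ext key
  rw [e1, hlamhat y (z * (y⁻¹ * x⁻¹ * y * x)) hy hzcZ hmW, hlamhat y z hy hz h₂]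
  rw [show (⟨z * (y⁻¹ * x⁻¹ * y * x), hzcZ⟩ : Z)
      = ⟨z, hz⟩ * ⟨y⁻¹ * x⁻¹ * y * x, h₃⟩ from rfl, map_mul]
end

section
/- (Lemma: inertia group of λ̂.) Under the Setup, the inertia group I_V(λ̂) := {g ∈ V : λ̂(g⁻¹·u·g) = λ̂(u) for all u ∈ YZ} (well-defined since YZ is normal in V) equals the set H·X' := {h·x : h ∈ H, x ∈ X'}. -/
open scoped Pointwise

/-- **inertia group of `λ̂`.** Under the Setup, the inertia group
`I_V(λ̂) = {g ∈ V : λ̂(g⁻¹·u·g) = λ̂(u) for all u ∈ YZ}` (well defined since `YZ ⊴ V`)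
equals the set `H·X' = {h·x : h ∈ H, x ∈ X'}`, where
`X' = {x ∈ X : λ([x,y]) = 1 for all y ∈ Y}`. -/
theorem inertia_group_of_lamhat
    {V : Type*} [Group V] [Fintype V]
    (H Y Z : Subgroup V) (X : Set V)
    (hXrep : ∀ v : V, ∃! p : ↥H × ↥X, (p.1 : V) * (p.2 : V) = v)
    (hZcent : Z ≤ Subgroup.center V)
    (hYH : Y ≤ H)
    (hYcent : ∀ y ∈ Y, ∀ h ∈ H, y * h = h * y)
    (hZY : Z ⊓ Y = ⊥)
    (lam : Z →* ℂˣ)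
    (hXYZ : ∀ x ∈ X, ∀ y ∈ Y, x⁻¹ * y⁻¹ * x * y ∈ Z)
    -- `W` is the subgroup `YZ` of `V`; it is normal in `V`
    (W : Subgroup V)
    (hW : (W : Set V) = (Y : Set V) * (Z : Set V))
    (hWnormal : ∀ (g : V), ∀ u ∈ W, g⁻¹ * u * g ∈ W)
    -- `λ̂ : YZ → ℂˣ` is the unique homomorphism with `λ̂(y·z) = λ(z)`
    (lamhat : W →* ℂˣ)
    (hlamhat : ∀ (y z : V) (hy : y ∈ Y) (hz : z ∈ Z) (hm : y * z ∈ W),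
      lamhat ⟨y * z, hm⟩ = lam ⟨z, hz⟩) :
    {g : V | ∀ (u : V) (hu : u ∈ W),
        lamhat ⟨g⁻¹ * u * g, hWnormal g u hu⟩ = lamhat ⟨u, hu⟩} =
      {v : V | ∃ h ∈ H, ∃ x ∈ X,
        (∀ (y : V) (hy : y ∈ Y) (hc : x⁻¹ * y⁻¹ * x * y ∈ Z),
          lam ⟨x⁻¹ * y⁻¹ * x * y, hc⟩ = 1) ∧ v = h * x} := by
  -- key conjugation identity
  have zc : ∀ z ∈ Z, ∀ a : V, z * a = a * z := by
    intro z hz a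
    exact (Subgroup.mem_center_iff.mp (hZcent hz) a).symm
  have key : ∀ (h : V), h ∈ H → ∀ (x : V), ∀ (y : V), y ∈ Y → ∀ (z : V), z ∈ Z →
      (h * x)⁻¹ * (y * z) * (h * x) = y * ((y⁻¹ * x⁻¹ * y * x) * z) := by
    intro h hh x y hy z hz
    have h2 : y * h = h * y := hYcent y hy h hh
    have e1 : (h * x)⁻¹ * (y * z) * (h * x) = ((h * x)⁻¹ * y * (h * x)) * z := by
      calc (h * x)⁻¹ * (y * z) * (h * x) = (h * x)⁻¹ * (z * y) * (h * x) := by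
            rw [← zc z hz y]
        _ = z * ((h * x)⁻¹ * y * (h * x)) := by
            rw [show (h * x)⁻¹ * (z * y) = z * ((h * x)⁻¹ * y) from by
              rw [← mul_assoc, ← zc z hz (h * x)⁻¹, mul_assoc]]
            group
        _ = ((h * x)⁻¹ * y * (h * x)) * z := zc z hz _
    have e2 : (h * x)⁻¹ * y * (h * x) = x⁻¹ * (h⁻¹ * (y * h)) * x := by group
    have e3 : h⁻¹ * (y * h) = y := by rw [h2]; group
    rw [e1, e2, e3]
    group
  have hmemW : ∀ y ∈ Y, ∀ z ∈ Z, y * z ∈ W := by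
    intro y hy z hz
    rw [← SetLike.mem_coe, hW]
    exact Set.mul_mem_mul hy hz
  ext g
  simp only [Set.mem_setOf_eq]
  constructor
  · intro hg
    obtain ⟨⟨hh, xx⟩, hp, -⟩ := hXrep g
    refine ⟨hh, hh.2, xx, xx.2, ?_, hp.symm⟩
    intro y hy hc
    set h : V := (hh : V)
    set x : V := (xx : V)
    have hcZ : y⁻¹ * x⁻¹ * y * x ∈ Z := by
      have := Z.inv_mem hc
      simpa [mul_inv_rev, mul_assoc] using this
    have huW : y ∈ W := by
      have := hmemW y hy 1 Z.one_mem
      simpa using this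
    have hgy := hg y huW
    have hkey := key h hh.2 x y hy 1 Z.one_mem
    simp only [mul_one] at hkey
    have hgconj : g⁻¹ * y * g = y * (y⁻¹ * x⁻¹ * y * x) := by
      rw [← hp]; exact hkey
    have hmem2 : y * (y⁻¹ * x⁻¹ * y * x) ∈ W := hmemW y hy _ hcZ
    have hL : lamhat ⟨g⁻¹ * y * g, hWnormal g y huW⟩ = lam ⟨y⁻¹ * x⁻¹ * y * x, hcZ⟩ := by
      have := hlamhat y (y⁻¹ * x⁻¹ * y * x) hy hcZ hmem2
      rw [show (⟨g⁻¹ * y * g, hWnormal g y huW⟩ : W) = ⟨y * (y⁻¹ * x⁻¹ * y * x), hmem2⟩ from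
        Subtype.ext hgconj]
      exact this
    have hR : lamhat ⟨y, huW⟩ = 1 := by
      have hm1 : y * 1 ∈ W := hmemW y hy 1 Z.one_mem
      have := hlamhat y 1 hy Z.one_mem hm1
      rw [show (⟨y, huW⟩ : W) = ⟨y * 1, hm1⟩ from Subtype.ext (mul_one y).symm, this]
      exact map_one lam
    have hlc : lam ⟨y⁻¹ * x⁻¹ * y * x, hcZ⟩ = 1 := by rw [← hL, hgy, hR]
    have hinv : (⟨x⁻¹ * y⁻¹ * x * y, hc⟩ : Z) = (⟨y⁻¹ * x⁻¹ * y * x, hcZ⟩ : Z)⁻¹ := by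
      apply Subtype.ext
      simp [mul_inv_rev, mul_assoc]
    rw [hinv, map_inv, hlc, inv_one]
  · rintro ⟨h, hh, x, hx, hcond, rfl⟩
    intro u hu
    have hu' : u ∈ (Y : Set V) * (Z : Set V) := by rw [← hW]; exact hu
    obtain ⟨y, hy, z, hz, rfl⟩ := hu'
    have hd : x⁻¹ * y⁻¹ * x * y ∈ Z := hXYZ x hx y hy
    have hcZ : y⁻¹ * x⁻¹ * y * x ∈ Z := by
      have := Z.inv_mem hd
      simpa [mul_inv_rev, mul_assoc] using this
    have hcz : (y⁻¹ * x⁻¹ * y * x) * z ∈ Z := Z.mul_mem hcZ hz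
    have hkey := key h hh x y hy z hz
    have hmem2 : y * ((y⁻¹ * x⁻¹ * y * x) * z) ∈ W := hmemW y hy _ hcz
    have hL : lamhat ⟨(h * x)⁻¹ * (y * z) * (h * x), hWnormal (h * x) (y * z) hu⟩
        = lam ⟨(y⁻¹ * x⁻¹ * y * x) * z, hcz⟩ := by
      rw [show (⟨(h * x)⁻¹ * (y * z) * (h * x), hWnormal (h * x) (y * z) hu⟩ : W)
          = ⟨y * ((y⁻¹ * x⁻¹ * y * x) * z), hmem2⟩ from Subtype.ext hkey]
      exact hlamhat y _ hy hcz hmem2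
    have hlc : lam ⟨y⁻¹ * x⁻¹ * y * x, hcZ⟩ = 1 := by
      have hinv : (⟨y⁻¹ * x⁻¹ * y * x, hcZ⟩ : Z) = (⟨x⁻¹ * y⁻¹ * x * y, hd⟩ : Z)⁻¹ := by
        apply Subtype.ext
        simp [mul_inv_rev, mul_assoc]
      rw [hinv, map_inv, hcond y hy hd, inv_one]
    have hsplit : (⟨(y⁻¹ * x⁻¹ * y * x) * z, hcz⟩ : Z)
        = ⟨y⁻¹ * x⁻¹ * y * x, hcZ⟩ * ⟨z, hz⟩ := rfl
    rw [hL, hsplit, map_mul, hlc, one_mul, hlamhat y z hy hz hu]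
end

section
/- (Lemma: the dual group W_{X̃}, part 1.) Under the Setup with the dual-side data, for every x̃ ∈ X̃ the map ψ_{x̃} : Y → ℂˣ, y ↦ λ([y, x̃]), is a group homomorphism, and the set W_{X̃} := {ψ_{x̃} : x̃ ∈ X̃} is a subgroup of the group of all group homomorphisms Y → ℂˣ under pointwise multiplication. -/
open scoped Pointwise

/-- **the dual group `W_{X̃}`, part 1.** Under the Setup with the dual-side
data (the subgroup `H' = H·X'` and a transversal `X̃` of its right cosets in `V`), for
every `x̃ ∈ X̃` the map `ψ_{x̃} : Y → ℂˣ`, `y ↦ λ([y, x̃])`, is a group homomorphism, and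
the set `W_{X̃} = {ψ_{x̃} : x̃ ∈ X̃}` is a subgroup of the group of all homomorphisms
`Y → ℂˣ` under pointwise multiplication (it contains the identity and is closed under
pointwise products and inverses). -/
theorem dual_group_part_one
    {V : Type*} [Group V] [Fintype V]
    (H Y Z : Subgroup V) (X : Set V)
    (hXrep : ∀ v : V, ∃! p : ↥H × ↥X, (p.1 : V) * (p.2 : V) = v)
    (hZcent : Z ≤ Subgroup.center V)
    (hYH : Y ≤ H)
    (hYcent : ∀ y ∈ Y, ∀ h ∈ H, y * h = h * y)
    (hZY : Z ⊓ Y = ⊥)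
    (lam : Z →* ℂˣ)
    (hXYZ : ∀ x ∈ X, ∀ y ∈ Y, x⁻¹ * y⁻¹ * x * y ∈ Z)
    -- `H'` is the subgroup `H·X'` of `V` (the inertia group of `λ̂`)
    (H' : Subgroup V)
    (hH' : (H' : Set V) = {v : V | ∃ h ∈ H, ∃ x ∈ X,
      (∀ (y : V) (hy : y ∈ Y) (hc : x⁻¹ * y⁻¹ * x * y ∈ Z),
        lam ⟨x⁻¹ * y⁻¹ * x * y, hc⟩ = 1) ∧ v = h * x})
    -- `X̃` is a transversal of the right cosets of `H'` in `V`
    (Xt : Set V)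
    (hXtrep : ∀ v : V, ∃! p : ↥H' × ↥Xt, (p.1 : V) * (p.2 : V) = v)
    -- `[Y, V] ⊆ Z`, so that `ψ_{x̃}` is well defined
    (hYV : ∀ (y : V), y ∈ Y → ∀ g : V, y⁻¹ * g⁻¹ * y * g ∈ Z)
    -- `ψ x̃ : Y → ℂˣ` is the map `y ↦ λ([y, x̃])`
    (ψ : V → (↥Y → ℂˣ))
    (hψ : ∀ (xt : V) (y : ↥Y),
      ψ xt y = lam ⟨(y : V)⁻¹ * xt⁻¹ * (y : V) * xt, hYV (y : V) y.2 xt⟩) :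
    (∀ xt ∈ Xt, ∀ y₁ y₂ : ↥Y, ψ xt (y₁ * y₂) = ψ xt y₁ * ψ xt y₂) ∧
    ((fun _ : ↥Y => (1 : ℂˣ)) ∈ {f : ↥Y → ℂˣ | ∃ xt ∈ Xt, f = ψ xt}) ∧
    (∀ f ∈ {f : ↥Y → ℂˣ | ∃ xt ∈ Xt, f = ψ xt},
      ∀ g ∈ {f : ↥Y → ℂˣ | ∃ xt ∈ Xt, f = ψ xt},
        (fun y => f y * g y) ∈ {f : ↥Y → ℂˣ | ∃ xt ∈ Xt, f = ψ xt}) ∧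
    (∀ f ∈ {f : ↥Y → ℂˣ | ∃ xt ∈ Xt, f = ψ xt},
      (fun y => (f y)⁻¹) ∈ {f : ↥Y → ℂˣ | ∃ xt ∈ Xt, f = ψ xt}) := by

  -- elements of `Z` are central
  have central : ∀ c ∈ Z, ∀ g : V, g * c = c * g := fun c hc g =>
    Subgroup.mem_center_iff.mp (hZcent hc) g
  have hlam_eq : ∀ (a b : V) (ha : a ∈ Z) (hb : b ∈ Z), a = b →
      lam ⟨a, ha⟩ = lam ⟨b, hb⟩ := by
    rintro a b ha hb rfl; rfl
  have hlam_mul : ∀ (a b : V) (ha : a ∈ Z) (hb : b ∈ Z) (hab : a * b ∈ Z),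
      lam ⟨a * b, hab⟩ = lam ⟨a, ha⟩ * lam ⟨b, hb⟩ := by
    intro a b ha hb hab
    rw [show (⟨a * b, hab⟩ : Z) = ⟨a, ha⟩ * ⟨b, hb⟩ from rfl, map_mul]
  -- multiplicativity of the commutator in the right argument
  have comm_mul_right : ∀ (y : V), y ∈ Y → ∀ w v : V,
      y⁻¹ * (w * v)⁻¹ * y * (w * v) = (y⁻¹ * w⁻¹ * y * w) * (y⁻¹ * v⁻¹ * y * v) := by
    intro y hy w v
    have hc : y⁻¹ * w⁻¹ * y * w ∈ Z := hYV y hy w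
    have h1 : w⁻¹ * y * w = y * (y⁻¹ * w⁻¹ * y * w) := by group
    have h2 : y⁻¹ * (w * v)⁻¹ * y * (w * v) = y⁻¹ * v⁻¹ * (w⁻¹ * y * w) * v := by group
    rw [h2, h1]
    have h3 : y⁻¹ * v⁻¹ * (y * (y⁻¹ * w⁻¹ * y * w)) * v
        = y⁻¹ * v⁻¹ * y * ((y⁻¹ * w⁻¹ * y * w) * v) := by group
    rw [h3, ← central _ hc v]
    have h4 : ∀ c : V, y⁻¹ * v⁻¹ * y * (v * c) = (y⁻¹ * v⁻¹ * y * v) * c := by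
      intro c; group
    rw [h4, ← central _ hc (y⁻¹ * v⁻¹ * y * v)]
  -- multiplicativity of the commutator in the left argument
  have comm_mul_left : ∀ (y₁ y₂ : V), y₁ ∈ Y → y₂ ∈ Y → ∀ g : V,
      (y₁ * y₂)⁻¹ * g⁻¹ * (y₁ * y₂) * g
        = (y₁⁻¹ * g⁻¹ * y₁ * g) * (y₂⁻¹ * g⁻¹ * y₂ * g) := by
    intro y₁ y₂ hy₁ hy₂ g
    have hc : y₁⁻¹ * g⁻¹ * y₁ * g ∈ Z := hYV y₁ hy₁ g
    calc (y₁ * y₂)⁻¹ * g⁻¹ * (y₁ * y₂) * g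
        = y₂⁻¹ * (y₁⁻¹ * g⁻¹ * y₁ * g) * (g⁻¹ * y₂ * g) := by group
      _ = (y₁⁻¹ * g⁻¹ * y₁ * g) * y₂⁻¹ * (g⁻¹ * y₂ * g) := by
          rw [central _ hc y₂⁻¹]
      _ = (y₁⁻¹ * g⁻¹ * y₁ * g) * (y₂⁻¹ * g⁻¹ * y₂ * g) := by group
  -- `λ` of the commutator with an element of `H'` is trivial
  have hH'triv : ∀ v ∈ H', ∀ (y : V), y ∈ Y → ∀ (hm : y⁻¹ * v⁻¹ * y * v ∈ Z),
      lam ⟨y⁻¹ * v⁻¹ * y * v, hm⟩ = 1 := by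
    intro v hv y hy hm
    have hv' : v ∈ (H' : Set V) := hv
    rw [hH'] at hv'
    obtain ⟨h, hh, x, hx, hprop, rfl⟩ := hv'
    have hyh : h⁻¹ * y * h = y := by
      have := hYcent y hy h hh
      calc h⁻¹ * y * h = h⁻¹ * (y * h) := by group
        _ = h⁻¹ * (h * y) := by rw [this]
        _ = y := by group
    have hcx : x⁻¹ * y⁻¹ * x * y ∈ Z := hXYZ x hx y hy
    have heq : y⁻¹ * (h * x)⁻¹ * y * (h * x) = (x⁻¹ * y⁻¹ * x * y)⁻¹ := by
      have : y⁻¹ * (h * x)⁻¹ * y * (h * x) = y⁻¹ * x⁻¹ * (h⁻¹ * y * h) * x := by group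
      rw [this, hyh]; group
    rw [hlam_eq _ _ hm (inv_mem hcx) heq]
    rw [show (⟨(x⁻¹ * y⁻¹ * x * y)⁻¹, inv_mem hcx⟩ : Z) = (⟨x⁻¹ * y⁻¹ * x * y, hcx⟩)⁻¹
      from rfl, map_inv, hprop y hy hcx, inv_one]
  -- `ψ` is multiplicative in its `V`-argument
  have hψmul : ∀ (w v : V) (y : ↥Y), ψ (w * v) y = ψ w y * ψ v y := by
    intro w v y
    rw [hψ, hψ, hψ]
    rw [hlam_eq _ _ (hYV (y : V) y.2 (w * v)) (mul_mem (hYV (y : V) y.2 w) (hYV (y : V) y.2 v))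
      (comm_mul_right (y : V) y.2 w v)]
    exact hlam_mul _ _ (hYV (y : V) y.2 w) (hYV (y : V) y.2 v) _
  -- `ψ` is trivial on `H'`
  have hψH' : ∀ v ∈ H', ∀ y : ↥Y, ψ v y = 1 := by
    intro v hv y
    rw [hψ]
    exact hH'triv v hv (y : V) y.2 _
  have hψone : ∀ y : ↥Y, ψ 1 y = 1 := fun y => hψH' 1 (one_mem H') y
  refine ⟨?_, ?_, ?_, ?_⟩
  · -- each ψ xt is a homomorphism
    intro xt _ y₁ y₂
    rw [hψ, hψ, hψ]
    have hco : ((y₁ * y₂ : ↥Y) : V) = (y₁ : V) * (y₂ : V) := rfl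
    rw [hlam_eq _ _ (hYV _ (y₁ * y₂).2 xt)
      (mul_mem (hYV (y₁ : V) y₁.2 xt) (hYV (y₂ : V) y₂.2 xt))
      (by rw [hco]; exact comm_mul_left (y₁ : V) (y₂ : V) y₁.2 y₂.2 xt)]
    exact hlam_mul _ _ _ _ _
  · -- the identity is in W
    obtain ⟨⟨h', xt⟩, hp, -⟩ := hXtrep 1
    refine ⟨(xt : V), xt.2, funext fun y => ?_⟩
    have hxtH' : (xt : V) ∈ H' := by
      have : (xt : V) = (h' : V)⁻¹ := eq_inv_of_mul_eq_one_right hp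
      rw [this]; exact inv_mem h'.2
    exact (hψH' _ hxtH' y).symm
  · -- closed under products
    rintro f ⟨xt₁, hxt₁, rfl⟩ g ⟨xt₂, hxt₂, rfl⟩
    obtain ⟨⟨h', xt⟩, hp, -⟩ := hXtrep (xt₁ * xt₂)
    refine ⟨(xt : V), xt.2, funext fun y => ?_⟩
    have h1 : ψ ((h' : V) * (xt : V)) y = ψ (xt : V) y := by
      rw [hψmul, hψH' _ h'.2, one_mul]
    have h2 : ψ ((h' : V) * (xt : V)) y = ψ xt₁ y * ψ xt₂ y := by
      rw [hp, hψmul]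
    simp only [← h2, h1]
  · -- closed under inverses
    rintro f ⟨xt₁, hxt₁, rfl⟩
    obtain ⟨⟨h', xt⟩, hp, -⟩ := hXtrep xt₁⁻¹
    refine ⟨(xt : V), xt.2, funext fun y => ?_⟩
    have h1 : ψ ((h' : V) * (xt : V)) y = ψ (xt : V) y := by
      rw [hψmul, hψH' _ h'.2, one_mul]
    have h2 : ψ xt₁ y * ψ xt₁⁻¹ y = 1 := by
      rw [← hψmul, mul_inv_cancel, hψone]
    rw [← h1, hp]
    exact (eq_inv_of_mul_eq_one_right h2).symm
end

section
/- (Lemma: the dual group W_{X̃}, part 2.) Under the Setup with the dual-side data, the map X̃ → W_{X̃}, x̃ ↦ ψ_{x̃}, is injective; consequently the cardinality of X̃ equals the cardinality of W_{X̃}, and moreover both equal the index [Y : Y'] of the subgroup Y' in Y. -/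
/-!
Since `[Y, V] ⊆ Z` is central, `β g y := λ([y, g])` is multiplicative in both `g ∈ V` and
`y ∈ Y`. Because `H` centralises `Y`, `β (h * x) = β x`, so `H'` is exactly the kernel of
`g ↦ β g` and `Y'` is exactly the kernel of `y ↦ β · y`. Then `ψ` is `g ↦ β g`, a homomorphism
with kernel `H'`, hence injective on a transversal of `H'`. Summing `β g y` over `V × Y` in
both orders, character orthogonality gives `|V| · |Y'| = |Y| · |H'|`, i.e. `[V : H'] = [Y : Y']`.
-/

section Duality

variable {K G R : Type*} [Group K] [Group G] [CommRing R] [IsDomain R]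

theorem sum_coe_hom_units [Fintype G] (f : G →* Rˣ) [Decidable (f = 1)] :
    ∑ g : G, (f g : R) = if f = 1 then (Fintype.card G : R) else 0 := by
  split_ifs with hf
  · simp [hf]
  · refine sum_hom_units_eq_zero ((Units.coeHom R).comp f) fun h ↦ hf ?_
    ext g
    exact DFunLike.congr_fun h g

variable [Finite K] [Finite G] [CharZero R]

theorem MonoidHom.card_mul_card_ker_flip (β : K →* G →* Rˣ) :
    Nat.card K * Nat.card β.flip.ker = Nat.card G * Nat.card β.ker := by
  classical
  have := Fintype.ofFinite K
  have := Fintype.ofFinite G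
  have hrow (g : G) : ∑ k, (β k g : R) = if g ∈ β.flip.ker then (Fintype.card K : R) else 0 :=
    (sum_coe_hom_units (β.flip g)).trans (if_congr Iff.rfl rfl rfl)
  have hcol (k : K) : ∑ g, (β k g : R) = if k ∈ β.ker then (Fintype.card G : R) else 0 :=
    (sum_coe_hom_units (β k)).trans (if_congr Iff.rfl rfl rfl)
  rw [Nat.card_eq_fintype_card (α := K), Nat.card_eq_fintype_card (α := G)]
  exact_mod_cast calc (Fintype.card K * Nat.card β.flip.ker : R)
      _ = ∑ g, ∑ k, (β k g : R) := by
        simp [hrow, Finset.sum_ite, Nat.card_eq_fintype_card, Fintype.card_subtype, mul_comm]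
      _ = ∑ k, ∑ g, (β k g : R) := Finset.sum_comm
      _ = Fintype.card G * Nat.card β.ker := by
        simp [hcol, Finset.sum_ite, Nat.card_eq_fintype_card, Fintype.card_subtype, mul_comm]

theorem MonoidHom.index_ker_flip (β : K →* G →* Rˣ) : β.flip.ker.index = β.ker.index := by
  have h := β.card_mul_card_ker_flip
  rw [← β.ker.card_mul_index, ← β.flip.ker.card_mul_index] at h
  have hpos : 0 < Nat.card β.ker * Nat.card β.flip.ker := Nat.mul_pos Nat.card_pos Nat.card_pos
  exact Nat.eq_of_mul_eq_mul_left hpos (by linarith)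

end Duality

section CommutatorPairing

variable {V : Type*} [Group V]

-- Commutators here are `a⁻¹ * g⁻¹ * a * g`, not Mathlib's `⁅a, g⁆ = a * g * a⁻¹ * g⁻¹`.
theorem commutator_mul_right_of_mem_center {a g h : V}
    (hc : a⁻¹ * g⁻¹ * a * g ∈ Subgroup.center V) :
    a⁻¹ * (g * h)⁻¹ * a * (g * h) = (a⁻¹ * g⁻¹ * a * g) * (a⁻¹ * h⁻¹ * a * h) :=
  calc a⁻¹ * (g * h)⁻¹ * a * (g * h) = a⁻¹ * h⁻¹ * a * ((a⁻¹ * g⁻¹ * a * g) * h) := by group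
    _ = a⁻¹ * h⁻¹ * a * (h * (a⁻¹ * g⁻¹ * a * g)) := by rw [Subgroup.mem_center_iff.mp hc h]
    _ = (a⁻¹ * g⁻¹ * a * g) * (a⁻¹ * h⁻¹ * a * h) := by
      rw [← mul_assoc, ← Subgroup.mem_center_iff.mp hc]

theorem commutator_mul_left_of_mem_center {a b g : V}
    (hc : a⁻¹ * g⁻¹ * a * g ∈ Subgroup.center V) :
    (a * b)⁻¹ * g⁻¹ * (a * b) * g = (a⁻¹ * g⁻¹ * a * g) * (b⁻¹ * g⁻¹ * b * g) :=
  calc (a * b)⁻¹ * g⁻¹ * (a * b) * g = b⁻¹ * (a⁻¹ * g⁻¹ * a * g) * (g⁻¹ * b * g) := by group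
    _ = (a⁻¹ * g⁻¹ * a * g) * (b⁻¹ * g⁻¹ * b * g) := by
      rw [Subgroup.mem_center_iff.mp hc b⁻¹]; group

theorem commutator_swap_mem {Y Z : Subgroup V}
    (hYZ : ∀ y ∈ Y, ∀ g : V, y⁻¹ * g⁻¹ * y * g ∈ Z) {y : V} (hy : y ∈ Y) (x : V) :
    x⁻¹ * y⁻¹ * x * y ∈ Z := by
  simpa [mul_assoc] using Z.inv_mem (hYZ y hy x)

variable {A : Type*} [CommGroup A] {Y Z : Subgroup V} (hZ : Z ≤ Subgroup.center V)
  (hYZ : ∀ y ∈ Y, ∀ g : V, y⁻¹ * g⁻¹ * y * g ∈ Z) (lam : Z →* A)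

def commutatorPairing : V →* Y →* A where
  toFun g :=
    { toFun y := lam ⟨(y : V)⁻¹ * g⁻¹ * y * g, hYZ y y.2 g⟩
      map_one' := (congrArg lam (Subtype.ext (by simp))).trans (map_one lam)
      map_mul' y₁ y₂ := by
        rw [← map_mul]
        congr 1
        exact Subtype.ext (commutator_mul_left_of_mem_center (hZ (hYZ _ y₁.2 g))) }
  map_one' := by ext y; exact (congrArg lam (Subtype.ext (by simp))).trans (map_one lam)
  map_mul' g₁ g₂ := by
    ext y
    simp only [MonoidHom.coe_mk, OneHom.coe_mk, MonoidHom.mul_apply, ← map_mul]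
    congr 1
    exact Subtype.ext (commutator_mul_right_of_mem_center (hZ (hYZ _ y.2 g₁)))

@[simp]
theorem commutatorPairing_apply (g : V) (y : Y) :
    commutatorPairing hZ hYZ lam g y = lam ⟨(y : V)⁻¹ * g⁻¹ * y * g, hYZ y y.2 g⟩ :=
  rfl

theorem commutatorPairing_eq_one_of_commute {h : V} (hh : ∀ y ∈ Y, y * h = h * y) :
    commutatorPairing hZ hYZ lam h = 1 := by
  ext y
  simp only [commutatorPairing_apply, MonoidHom.one_apply]
  convert map_one lam
  simp [mul_assoc, hh y y.2]

theorem map_commutator_eq_inv_commutatorPairing (x : V) (y : Y)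
    (hc : x⁻¹ * (y : V)⁻¹ * x * y ∈ Z) :
    lam ⟨x⁻¹ * (y : V)⁻¹ * x * y, hc⟩ = (commutatorPairing hZ hYZ lam x y)⁻¹ := by
  rw [commutatorPairing_apply, ← map_inv]
  congr 1
  ext
  simp [mul_assoc]

variable {H : Subgroup V} {X : Set V}

theorem commutatorPairing_mul_of_mem (hYH : ∀ y ∈ Y, ∀ h ∈ H, y * h = h * y) {h : V}
    (hh : h ∈ H) (x : V) :
    commutatorPairing hZ hYZ lam (h * x) = commutatorPairing hZ hYZ lam x := by
  rw [map_mul, commutatorPairing_eq_one_of_commute hZ hYZ lam (fun y hy ↦ hYH y hy h hh), one_mul]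

theorem commutatorPairing_eq_one_iff (x : V) :
    commutatorPairing hZ hYZ lam x = 1 ↔
      ∀ y ∈ Y, ∀ (hc : x⁻¹ * y⁻¹ * x * y ∈ Z), lam ⟨x⁻¹ * y⁻¹ * x * y, hc⟩ = 1 := by
  constructor
  · intro hx y hy hc
    exact (map_commutator_eq_inv_commutatorPairing hZ hYZ lam x ⟨y, hy⟩ hc).trans (by simp [hx])
  · intro hx
    ext y
    have hc := commutator_swap_mem hYZ y.2 x
    simpa [map_commutator_eq_inv_commutatorPairing hZ hYZ lam x y hc] using hx y y.2 hc

theorem coe_ker_commutatorPairing (hHX : ∀ v : V, ∃ p : H × X, (p.1 : V) * p.2 = v)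
    (hYH : ∀ y ∈ Y, ∀ h ∈ H, y * h = h * y) :
    ((commutatorPairing hZ hYZ lam).ker : Set V) = {v : V | ∃ h ∈ H, ∃ x ∈ X,
      (∀ y ∈ Y, ∀ (hc : x⁻¹ * y⁻¹ * x * y ∈ Z),
        lam ⟨x⁻¹ * y⁻¹ * x * y, hc⟩ = 1) ∧ v = h * x} := by
  ext g
  constructor
  · intro hg
    obtain ⟨⟨h, x⟩, rfl⟩ := hHX g
    refine ⟨h, h.2, x, x.2, (commutatorPairing_eq_one_iff hZ hYZ lam x).1 ?_, rfl⟩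
    rwa [← commutatorPairing_mul_of_mem hZ hYZ lam hYH h.2]
  · rintro ⟨h, hh, x, -, hx, rfl⟩
    rw [SetLike.mem_coe, MonoidHom.mem_ker, commutatorPairing_mul_of_mem hZ hYZ lam hYH hh,
      commutatorPairing_eq_one_iff]
    exact hx

theorem coe_map_ker_flip_commutatorPairing (hHX : ∀ v : V, ∃ p : H × X, (p.1 : V) * p.2 = v)
    (hYH : ∀ y ∈ Y, ∀ h ∈ H, y * h = h * y) :
    (((commutatorPairing hZ hYZ lam).flip.ker.map Y.subtype : Subgroup V) : Set V) =
      {y : V | y ∈ Y ∧ ∀ x ∈ X,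
        ∀ (hc : x⁻¹ * y⁻¹ * x * y ∈ Z), lam ⟨x⁻¹ * y⁻¹ * x * y, hc⟩ = 1} := by
  ext y
  constructor
  · rintro ⟨y, hy, rfl⟩
    refine ⟨y.2, fun x _ hc ↦ ?_⟩
    change lam ⟨x⁻¹ * (y : V)⁻¹ * x * y, hc⟩ = 1
    rw [map_commutator_eq_inv_commutatorPairing hZ hYZ lam x y hc, inv_eq_one]
    exact DFunLike.congr_fun hy x
  · rintro ⟨hyY, hy⟩
    refine ⟨⟨y, hyY⟩, ?_, rfl⟩
    ext g
    obtain ⟨⟨h, x⟩, rfl⟩ := hHX g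
    rw [MonoidHom.flip_apply, commutatorPairing_mul_of_mem hZ hYZ lam hYH h.2, MonoidHom.one_apply,
      ← inv_eq_one, ← map_commutator_eq_inv_commutatorPairing]
    exact hy x x.2 (commutator_swap_mem hYZ hyY x)

end CommutatorPairing

theorem Subgroup.IsComplement.injOn_of_ker_le {G M : Type*} [Group G] [Group M]
    {H : Subgroup G} {T : Set G} (hT : IsComplement (H : Set G) T) {f : G →* M}
    (hf : f.ker ≤ H) : Set.InjOn f T := by
  intro a ha b hb hab
  have hab' : a * b⁻¹ ∈ H := hf (by rw [MonoidHom.mem_ker, map_mul, map_inv, hab, mul_inv_cancel])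
  have hpair := (hT.existsUnique a).unique (y₁ := (⟨a * b⁻¹, hab'⟩, ⟨b, hb⟩))
    (y₂ := (⟨1, H.one_mem⟩, ⟨a, ha⟩)) (by simp) (by simp)
  exact (congrArg (fun p ↦ (p.2 : G)) hpair).symm

theorem dual_group_part_two_general
    {V : Type*} [Group V] [Fintype V]
    (H Y Z : Subgroup V) (X : Set V)
    (hXrep : ∀ v : V, ∃! p : ↥H × ↥X, (p.1 : V) * (p.2 : V) = v)
    (hZcent : Z ≤ Subgroup.center V)
    (hYcent : ∀ y ∈ Y, ∀ h ∈ H, y * h = h * y)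
    (lam : Z →* ℂˣ)
    -- `H'` is the subgroup `H·X'` of `V` (the inertia group of `λ̂`)
    (H' : Subgroup V)
    (hH' : (H' : Set V) = {v : V | ∃ h ∈ H, ∃ x ∈ X,
      (∀ (y : V) (hy : y ∈ Y) (hc : x⁻¹ * y⁻¹ * x * y ∈ Z),
        lam ⟨x⁻¹ * y⁻¹ * x * y, hc⟩ = 1) ∧ v = h * x})
    -- `X̃` is a transversal of the right cosets of `H'` in `V`
    (Xt : Set V)
    (hXtrep : ∀ v : V, ∃! p : ↥H' × ↥Xt, (p.1 : V) * (p.2 : V) = v)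
    -- `[Y, V] ⊆ Z`, so that `ψ_{x̃}` is well defined
    (hYV : ∀ (y : V), y ∈ Y → ∀ g : V, y⁻¹ * g⁻¹ * y * g ∈ Z)
    -- `ψ x̃ : Y → ℂˣ` is the map `y ↦ λ([y, x̃])`
    (ψ : V → (↥Y → ℂˣ))
    (hψ : ∀ (xt : V) (y : ↥Y),
      ψ xt y = lam ⟨(y : V)⁻¹ * xt⁻¹ * (y : V) * xt, hYV (y : V) y.2 xt⟩)
    -- `Y'` is the subgroup `{y ∈ Y : λ([x,y]) = 1 for all x ∈ X}` of `Y`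
    (Y' : Subgroup V)
    (hY' : (Y' : Set V) = {y : V | y ∈ Y ∧ ∀ x ∈ X,
      ∀ (hc : x⁻¹ * y⁻¹ * x * y ∈ Z), lam ⟨x⁻¹ * y⁻¹ * x * y, hc⟩ = 1}) :
    Set.InjOn ψ Xt ∧
    Xt.ncard = {f : ↥Y → ℂˣ | ∃ xt ∈ Xt, f = ψ xt}.ncard ∧
    Xt.ncard = Y'.relIndex Y := by
  set Ψ := commutatorPairing hZcent hYV lam
  have hHX v := (hXrep v).exists
  have hker : Ψ.ker = H' :=
    SetLike.coe_injective ((coe_ker_commutatorPairing hZcent hYV lam hHX hYcent).trans hH'.symm)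
  have hY'eq : Y' = Ψ.flip.ker.map Y.subtype :=
    SetLike.coe_injective
      (hY'.trans (coe_map_ker_flip_commutatorPairing hZcent hYV lam hHX hYcent).symm)
  have hXt : Subgroup.IsComplement (H' : Set V) Xt :=
    Subgroup.isComplement_iff_existsUnique.mpr hXtrep
  have hψΨ : ψ = (⇑) ∘ Ψ := funext fun g ↦ funext (hψ g)
  have hinj : Set.InjOn ψ Xt :=
    hψΨ ▸ DFunLike.coe_injective.comp_injOn (hXt.injOn_of_ker_le hker.le)
  refine ⟨hinj, ?_, ?_⟩
  · rw [← hinj.ncard_image]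
    congr 1
    ext f
    simp [eq_comm]
  · rw [hXt.ncard_right, ← hker, ← Ψ.index_ker_flip, hY'eq, Subgroup.relIndex, Subgroup.subgroupOf,
      Subgroup.comap_map_eq_self_of_injective Y.subtype_injective]

/-- **the dual group `W_{X̃}`, part 2.** Under the Setup with the dual-side
data, the map `X̃ → W_{X̃}`, `x̃ ↦ ψ_{x̃}`, is injective; consequently `|X̃| = |W_{X̃}|`,
and moreover both equal the index `[Y : Y']`. -/
theorem dual_group_part_two
    {V : Type*} [Group V] [Fintype V]
    (H Y Z : Subgroup V) (X : Set V)
    (hXrep : ∀ v : V, ∃! p : ↥H × ↥X, (p.1 : V) * (p.2 : V) = v)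
    (hZcent : Z ≤ Subgroup.center V)
    (hYH : Y ≤ H)
    (hYcent : ∀ y ∈ Y, ∀ h ∈ H, y * h = h * y)
    (hZY : Z ⊓ Y = ⊥)
    (lam : Z →* ℂˣ)
    (hXYZ : ∀ x ∈ X, ∀ y ∈ Y, x⁻¹ * y⁻¹ * x * y ∈ Z)
    -- `H'` is the subgroup `H·X'` of `V` (the inertia group of `λ̂`)
    (H' : Subgroup V)
    (hH' : (H' : Set V) = {v : V | ∃ h ∈ H, ∃ x ∈ X,
      (∀ (y : V) (hy : y ∈ Y) (hc : x⁻¹ * y⁻¹ * x * y ∈ Z),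
        lam ⟨x⁻¹ * y⁻¹ * x * y, hc⟩ = 1) ∧ v = h * x})
    -- `X̃` is a transversal of the right cosets of `H'` in `V`
    (Xt : Set V)
    (hXtrep : ∀ v : V, ∃! p : ↥H' × ↥Xt, (p.1 : V) * (p.2 : V) = v)
    -- `[Y, V] ⊆ Z`, so that `ψ_{x̃}` is well defined
    (hYV : ∀ (y : V), y ∈ Y → ∀ g : V, y⁻¹ * g⁻¹ * y * g ∈ Z)
    -- `ψ x̃ : Y → ℂˣ` is the map `y ↦ λ([y, x̃])`
    (ψ : V → (↥Y → ℂˣ))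
    (hψ : ∀ (xt : V) (y : ↥Y),
      ψ xt y = lam ⟨(y : V)⁻¹ * xt⁻¹ * (y : V) * xt, hYV (y : V) y.2 xt⟩)
    -- `Y'` is the subgroup `{y ∈ Y : λ([x,y]) = 1 for all x ∈ X}` of `Y`
    (Y' : Subgroup V) (hY'le : Y' ≤ Y)
    (hY' : (Y' : Set V) = {y : V | y ∈ Y ∧ ∀ x ∈ X,
      ∀ (hc : x⁻¹ * y⁻¹ * x * y ∈ Z), lam ⟨x⁻¹ * y⁻¹ * x * y, hc⟩ = 1}) :
    Set.InjOn ψ Xt ∧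
    Xt.ncard = {f : ↥Y → ℂˣ | ∃ xt ∈ Xt, f = ψ xt}.ncard ∧
    Xt.ncard = Y'.relIndex Y :=
  dual_group_part_two_general H Y Z X hXrep hZcent hYcent lam H' hH' Xt hXtrep hYV ψ hψ Y' hY'
end

section
/- Under the Setup with the dual-side data, Y' equals the intersection of the kernels of the characters in W_{X̃}: Y' = ⋂_{x̃ ∈ X̃} ker(ψ_{x̃}) = {y ∈ Y : λ([y, x̃]) = 1 for all x̃ ∈ X̃}. -/
open scoped Pointwise

/-- Under the Setup with the dual-side data, `Y'` equals the intersection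
of the kernels of the characters `ψ_{x̃}` of `W_{X̃}`:
`Y' = ⋂_{x̃ ∈ X̃} ker ψ_{x̃} = {y ∈ Y : λ([y, x̃]) = 1 for all x̃ ∈ X̃}`. -/
theorem Yprime_eq_inter_kernels
    {V : Type*} [Group V] [Fintype V]
    (H Y Z : Subgroup V) (X : Set V)
    (hXrep : ∀ v : V, ∃! p : ↥H × ↥X, (p.1 : V) * (p.2 : V) = v)
    (hZcent : Z ≤ Subgroup.center V)
    (hYH : Y ≤ H)
    (hYcent : ∀ y ∈ Y, ∀ h ∈ H, y * h = h * y)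
    (hZY : Z ⊓ Y = ⊥)
    (lam : Z →* ℂˣ)
    (hXYZ : ∀ x ∈ X, ∀ y ∈ Y, x⁻¹ * y⁻¹ * x * y ∈ Z)
    -- `H'` is the subgroup `H·X'` of `V` (the inertia group of `λ̂`)
    (H' : Subgroup V)
    (hH' : (H' : Set V) = {v : V | ∃ h ∈ H, ∃ x ∈ X,
      (∀ (y : V) (hy : y ∈ Y) (hc : x⁻¹ * y⁻¹ * x * y ∈ Z),
        lam ⟨x⁻¹ * y⁻¹ * x * y, hc⟩ = 1) ∧ v = h * x})
    -- `X̃` is a transversal of the right cosets of `H'` in `V`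
    (Xt : Set V)
    (hXtrep : ∀ v : V, ∃! p : ↥H' × ↥Xt, (p.1 : V) * (p.2 : V) = v)
    -- `[Y, V] ⊆ Z`, so that `ψ_{x̃}` is well defined
    (hYV : ∀ (y : V), y ∈ Y → ∀ g : V, y⁻¹ * g⁻¹ * y * g ∈ Z)
    -- `ψ x̃ : Y → ℂˣ` is the map `y ↦ λ([y, x̃])`
    (ψ : V → (↥Y → ℂˣ))
    (hψ : ∀ (xt : V) (y : ↥Y),
      ψ xt y = lam ⟨(y : V)⁻¹ * xt⁻¹ * (y : V) * xt, hYV (y : V) y.2 xt⟩) :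
    -- `Y' = {y ∈ Y : λ([y, x̃]) = 1 for all x̃ ∈ X̃}` ...
    ({y : V | y ∈ Y ∧ ∀ x ∈ X, ∀ (hc : x⁻¹ * y⁻¹ * x * y ∈ Z),
        lam ⟨x⁻¹ * y⁻¹ * x * y, hc⟩ = 1} =
      {y : V | y ∈ Y ∧ ∀ xt ∈ Xt, ∀ (hc : y⁻¹ * xt⁻¹ * y * xt ∈ Z),
        lam ⟨y⁻¹ * xt⁻¹ * y * xt, hc⟩ = 1}) ∧
    -- ... which is the intersection of the kernels of the `ψ_{x̃}`, `x̃ ∈ X̃`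
    ({y : V | y ∈ Y ∧ ∀ x ∈ X, ∀ (hc : x⁻¹ * y⁻¹ * x * y ∈ Z),
        lam ⟨x⁻¹ * y⁻¹ * x * y, hc⟩ = 1} =
      {y : V | ∃ hy : y ∈ Y, ∀ xt ∈ Xt, ψ xt ⟨y, hy⟩ = 1}) := by
  have key : ∀ y, ∀ hy : y ∈ Y,
      ((∀ x ∈ X, ∀ (hc : x⁻¹ * y⁻¹ * x * y ∈ Z),
          lam ⟨x⁻¹ * y⁻¹ * x * y, hc⟩ = 1) ↔
        (∀ xt ∈ Xt, ∀ (hc : y⁻¹ * xt⁻¹ * y * xt ∈ Z),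
          lam ⟨y⁻¹ * xt⁻¹ * y * xt, hc⟩ = 1)) := by
    intro y hy
    set F : V → ℂˣ := fun v => lam ⟨y⁻¹ * v⁻¹ * y * v, hYV y hy v⟩ with hFdef
    -- F is insensitive to the membership proof
    have Felem : ∀ v (hc : y⁻¹ * v⁻¹ * y * v ∈ Z),
        lam ⟨y⁻¹ * v⁻¹ * y * v, hc⟩ = F v := fun v hc => rfl
    -- F kills H on the left
    have FH : ∀ h ∈ H, ∀ v, F (h * v) = F v := by
      intro h hh v
      have h2 : h⁻¹ * y * h = y := by
        have := hYcent y hy h hh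
        rw [mul_assoc, this, ← mul_assoc, inv_mul_cancel, one_mul]
      have helem : y⁻¹ * (h * v)⁻¹ * y * (h * v) = y⁻¹ * v⁻¹ * y * v := by
        calc y⁻¹ * (h * v)⁻¹ * y * (h * v)
            = y⁻¹ * v⁻¹ * (h⁻¹ * y * h) * v := by group
          _ = y⁻¹ * v⁻¹ * y * v := by rw [h2]
      exact congrArg lam (Subtype.ext helem)
    -- F is multiplicative
    have Fmul : ∀ v w, F (v * w) = F v * F w := by
      intro v w
      have hcv := hZcent (hYV y hy v)
      rw [Subgroup.mem_center_iff] at hcv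
      have helem : y⁻¹ * (v * w)⁻¹ * y * (v * w)
          = (y⁻¹ * v⁻¹ * y * v) * (y⁻¹ * w⁻¹ * y * w) := by
        calc y⁻¹ * (v * w)⁻¹ * y * (v * w)
            = (y⁻¹ * w⁻¹ * y) * (y⁻¹ * v⁻¹ * y * v) * w := by group
          _ = (y⁻¹ * v⁻¹ * y * v) * (y⁻¹ * w⁻¹ * y) * w := by
              rw [hcv (y⁻¹ * w⁻¹ * y)]
          _ = (y⁻¹ * v⁻¹ * y * v) * (y⁻¹ * w⁻¹ * y * w) := by group
      have : (⟨y⁻¹ * (v * w)⁻¹ * y * (v * w), hYV y hy (v * w)⟩ : Z)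
          = ⟨y⁻¹ * v⁻¹ * y * v, hYV y hy v⟩ * ⟨y⁻¹ * w⁻¹ * y * w, hYV y hy w⟩ :=
        Subtype.ext helem
      rw [hFdef]
      simp only []
      rw [this, map_mul]
    -- F x is the inverse of λ([x,y])
    have Finv : ∀ x, ∀ hc : x⁻¹ * y⁻¹ * x * y ∈ Z,
        F x = (lam ⟨x⁻¹ * y⁻¹ * x * y, hc⟩)⁻¹ := by
      intro x hc
      have helem : (⟨y⁻¹ * x⁻¹ * y * x, hYV y hy x⟩ : Z)
          = (⟨x⁻¹ * y⁻¹ * x * y, hc⟩)⁻¹ := Subtype.ext (by push_cast; group)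
      show lam _ = _
      rw [helem, map_inv]
    constructor
    · -- forward
      intro hfor xt hxt hc
      obtain ⟨p, hp, -⟩ := hXrep xt
      rw [Felem xt hc, ← hp, FH p.1 p.1.2 p.2,
        Finv p.2 (hXYZ p.2 p.2.2 y hy), hfor p.2 p.2.2 (hXYZ p.2 p.2.2 y hy), inv_one]
    · -- backward
      intro hback x hx hc
      obtain ⟨p, hp, -⟩ := hXtrep x
      have hmem : (p.1 : V) ∈ (H' : Set V) := p.1.2
      rw [hH'] at hmem
      obtain ⟨h, hh, x', hx', hcond, heq⟩ := hmem
      have hFx : F x = 1 := by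
        have hx'1 : F x' = 1 := by
          rw [Finv x' (hXYZ x' hx' y hy), hcond y hy (hXYZ x' hx' y hy), inv_one]
        have hxt1 : F p.2 = 1 := hback p.2 p.2.2 (hYV y hy p.2)
        have hdecomp : x = h * (x' * (p.2 : V)) := by
          rw [← hp, heq, mul_assoc]
        rw [hdecomp, FH h hh, Fmul, hx'1, hxt1, one_mul]
      have := Finv x hc
      rw [hFx] at this
      rw [← inv_inv (lam ⟨x⁻¹ * y⁻¹ * x * y, hc⟩), ← this, inv_one]
  constructor
  · ext y
    simp only [Set.mem_setOf_eq]
    exact ⟨fun ⟨hy, h⟩ => ⟨hy, (key y hy).mp h⟩,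
      fun ⟨hy, h⟩ => ⟨hy, (key y hy).mpr h⟩⟩
  · ext y
    simp only [Set.mem_setOf_eq]
    constructor
    · rintro ⟨hy, h⟩
      refine ⟨hy, fun xt hxt => ?_⟩
      rw [hψ]
      exact (key y hy).mp h xt hxt _
    · rintro ⟨hy, h⟩
      refine ⟨hy, (key y hy).mpr fun xt hxt hc => ?_⟩
      have := h xt hxt
      rw [hψ] at this
      exact this
end

section
/- Under the Setup, for every y ∈ Y, every h ∈ H and every x ∈ X', the commutator [y, h·x] lies in Z and satisfies λ([y, h·x]) = 1. In particular, the image of Y is central in the quotient of H' := {h·x : h ∈ H, x ∈ X'} by any normal subgroup of H' containing ker λ. -/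
open scoped Pointwise

/-- Under the Setup, for every `y ∈ Y`, every `h ∈ H` and every `x ∈ X'`,
the commutator `[y, h·x]` lies in `Z` and satisfies `λ([y, h·x]) = 1`.  In particular, the
image of `Y` is central in the quotient of `H' = {h·x : h ∈ H, x ∈ X'}` by any normal
subgroup of `H'` containing `ker λ`. -/
theorem Y_central_mod_ker_lam
    {V : Type*} [Group V] [Fintype V]
    (H Y Z : Subgroup V) (X : Set V)
    (hXrep : ∀ v : V, ∃! p : ↥H × ↥X, (p.1 : V) * (p.2 : V) = v)
    (hZcent : Z ≤ Subgroup.center V)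
    (hYH : Y ≤ H)
    (hYcent : ∀ y ∈ Y, ∀ h ∈ H, y * h = h * y)
    (hZY : Z ⊓ Y = ⊥)
    (lam : Z →* ℂˣ)
    (hXYZ : ∀ x ∈ X, ∀ y ∈ Y, x⁻¹ * y⁻¹ * x * y ∈ Z)
    -- `H'` is the subgroup `H·X'` of `V`
    (H' : Subgroup V)
    (hH' : (H' : Set V) = {v : V | ∃ h ∈ H, ∃ x ∈ X,
      (∀ (y : V) (hy : y ∈ Y) (hc : x⁻¹ * y⁻¹ * x * y ∈ Z),
        lam ⟨x⁻¹ * y⁻¹ * x * y, hc⟩ = 1) ∧ v = h * x}) :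
    -- for `y ∈ Y`, `h ∈ H`, `x ∈ X'`: `[y, h·x] ∈ Z` and `λ([y, h·x]) = 1`
    (∀ (y : V), y ∈ Y → ∀ (h₀ : V), h₀ ∈ H → ∀ (x : V), x ∈ X →
      (∀ (y' : V), y' ∈ Y → ∀ (hc : x⁻¹ * y'⁻¹ * x * y' ∈ Z),
        lam ⟨x⁻¹ * y'⁻¹ * x * y', hc⟩ = 1) →
      (y⁻¹ * (h₀ * x)⁻¹ * y * (h₀ * x) ∈ Z ∧
        ∀ (hc : y⁻¹ * (h₀ * x)⁻¹ * y * (h₀ * x) ∈ Z),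
          lam ⟨y⁻¹ * (h₀ * x)⁻¹ * y * (h₀ * x), hc⟩ = 1)) ∧
    -- in particular, the image of `Y` is central in `H'/N` for every normal subgroup `N`
    -- of `H'` containing `ker λ`
    (∀ (N : Subgroup ↥H') [N.Normal],
      (∀ (z : V) (hz : z ∈ Z) (hz' : z ∈ H'),
        lam ⟨z, hz⟩ = 1 → (⟨z, hz'⟩ : ↥H') ∈ N) →
      ∀ (y : V) (hy : y ∈ Y) (hy' : y ∈ H'),
        (QuotientGroup.mk (⟨y, hy'⟩ : ↥H') : ↥H' ⧸ N) ∈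
          Subgroup.center (↥H' ⧸ N)) := by

  have part1 : ∀ (y : V), y ∈ Y → ∀ (h₀ : V), h₀ ∈ H → ∀ (x : V), x ∈ X →
      (∀ (y' : V), y' ∈ Y → ∀ (hc : x⁻¹ * y'⁻¹ * x * y' ∈ Z),
        lam ⟨x⁻¹ * y'⁻¹ * x * y', hc⟩ = 1) →
      (y⁻¹ * (h₀ * x)⁻¹ * y * (h₀ * x) ∈ Z ∧
        ∀ (hc : y⁻¹ * (h₀ * x)⁻¹ * y * (h₀ * x) ∈ Z),
          lam ⟨y⁻¹ * (h₀ * x)⁻¹ * y * (h₀ * x), hc⟩ = 1) := by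
    intro y hy h₀ hh₀ x hx hx'
    have h1 : y * h₀ = h₀ * y := hYcent y hy h₀ hh₀
    have hcomm : h₀⁻¹ * y * h₀ = y := by
      rw [mul_assoc, h1, ← mul_assoc, inv_mul_cancel, one_mul]
    have heq : y⁻¹ * (h₀ * x)⁻¹ * y * (h₀ * x) = (x⁻¹ * y⁻¹ * x * y)⁻¹ := by
      have : y⁻¹ * (h₀ * x)⁻¹ * y * (h₀ * x)
          = y⁻¹ * x⁻¹ * (h₀⁻¹ * y * h₀) * x := by group
      rw [this, hcomm]; group
    have hz : x⁻¹ * y⁻¹ * x * y ∈ Z := hXYZ x hx y hy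
    have hmem : y⁻¹ * (h₀ * x)⁻¹ * y * (h₀ * x) ∈ Z := heq ▸ Z.inv_mem hz
    refine ⟨hmem, fun hc => ?_⟩
    have hval : (⟨y⁻¹ * (h₀ * x)⁻¹ * y * (h₀ * x), hc⟩ : Z) = (⟨_, hz⟩ : Z)⁻¹ :=
      Subtype.ext (by simpa using heq)
    rw [hval, map_inv, hx' y hy hz, inv_one]
  refine ⟨part1, ?_⟩
  intro N _ hN y hy hy'
  rw [Subgroup.mem_center_iff]
  intro q
  refine QuotientGroup.induction_on q ?_
  intro g
  rw [← QuotientGroup.mk_mul, ← QuotientGroup.mk_mul, QuotientGroup.eq]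
  have hg : (g : V) ∈ (H' : Set V) := g.2
  rw [hH'] at hg
  obtain ⟨h₀, hh₀, x, hx, hx', hge⟩ := hg
  obtain ⟨hcz, hlam⟩ := part1 y hy h₀ hh₀ x hx hx'
  rw [← hge] at hcz hlam
  have hcH' : y⁻¹ * (g : V)⁻¹ * y * (g : V) ∈ H' := by
    exact H'.mul_mem (H'.mul_mem (H'.mul_mem (H'.inv_mem hy') (H'.inv_mem g.2)) hy') g.2
  have hNmem : (⟨y⁻¹ * (g : V)⁻¹ * y * (g : V), hcH'⟩ : ↥H') ∈ N :=
    hN _ hcz hcH' (hlam hcz)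
  have : (g * (⟨y, hy'⟩ : ↥H'))⁻¹ * ((⟨y, hy'⟩ : ↥H') * g)
      = (⟨y⁻¹ * (g : V)⁻¹ * y * (g : V), hcH'⟩ : ↥H') := by
    apply Subtype.ext
    push_cast
    group
  rw [this]
  exact hNmem
end

section
/- Under the Setup with a complement Ỹ of Y' in Y: let (W, ρ) be a finite-dimensional complex irreducible representation of V such that there exists a nonzero vector w ∈ W with ρ(z)·w = λ(z)·w for all z ∈ Z. Then there exists a nonzero vector w' ∈ W with ρ(u)·w' = λ̃(u)·w' for all u ∈ ZỸ. (In character-theoretic terms: every irreducible character of V lying over λ also lies over λ̃.) -/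
open scoped Pointwise

/-!
On an irreducible representation the central subgroup `Z` acts by the scalar `λ` (Schur). For
`1 ≠ ỹ ∈ Ỹ` there is `x ∈ X` with `λ([x, ỹ]) ≠ 1`; since `ỹ = (x⁻¹ỹx)·[x, ỹ]`, the character
satisfies `χ(ỹ) = λ([x, ỹ]) χ(ỹ)`, so `χ` vanishes on `Ỹ ∖ {1}`. Hence the restriction to `Ỹ` is a
multiple of the regular representation and has a nonzero fixed vector, on which `ZỸ` acts by `λ̃`.
-/

namespace Representation

variable {k G M : Type*} [Field k] [Group G] [AddCommGroup M] [Module k M]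
  (ρ : Representation k G M)

def weightSubmodule (Z : Subgroup G) (χ : Z →* kˣ) : Submodule k M :=
  ⨅ z : Z, Module.End.eigenspace (ρ z) (χ z : k)

variable {Z : Subgroup G} {χ : Z →* kˣ}

theorem mem_weightSubmodule {m : M} :
    m ∈ ρ.weightSubmodule Z χ ↔ ∀ z : Z, ρ z m = (χ z : k) • m := by
  simp only [weightSubmodule, Submodule.mem_iInf, Module.End.mem_eigenspace_iff]

theorem map_mem_weightSubmodule (hZ : Z ≤ Subgroup.center G) (g : G) {m : M}
    (hm : m ∈ ρ.weightSubmodule Z χ) : ρ g m ∈ ρ.weightSubmodule Z χ := by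
  rw [ρ.mem_weightSubmodule] at hm ⊢
  intro z
  have hcomm : (z : G) * g = g * z := Subgroup.mem_center_iff.mp (hZ z.2) g |>.symm
  rw [← Module.End.mul_apply, ← map_mul, hcomm, map_mul, Module.End.mul_apply, hm z, map_smul]

theorem weightSubmodule_eq_top (hZ : Z ≤ Subgroup.center G)
    (hirr : ∀ U : Submodule k M, (∀ g : G, ∀ m ∈ U, ρ g m ∈ U) → U = ⊥ ∨ U = ⊤)
    {w : M} (hw0 : w ≠ 0) (hw : w ∈ ρ.weightSubmodule Z χ) : ρ.weightSubmodule Z χ = ⊤ :=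
  (hirr _ fun g _ => ρ.map_mem_weightSubmodule hZ g).resolve_left
    fun hbot => hw0 <| (Submodule.eq_bot_iff _).mp hbot w hw

/-- `g = (x⁻¹gx)·[x, g]` with `[x, g] = x⁻¹g⁻¹xg` acting as `a`, so `χ(g) = a·χ(g)`. -/
theorem character_eq_zero_of_commutator_eq_smul_one {x g : G} {a : k}
    (hc : ρ (x⁻¹ * g⁻¹ * x * g) = a • 1) (ha : a ≠ 1) : ρ.character g = 0 := by
  have hsplit : g = (x⁻¹ * g * x⁻¹⁻¹) * (x⁻¹ * g⁻¹ * x * g) := by group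
  have hscale : ρ.character g = a * ρ.character g := by
    conv_lhs => rw [hsplit]
    rw [character, map_mul, hc, mul_smul_comm, mul_one, map_smul, smul_eq_mul, ← character,
      char_conj]
  have : (1 - a) * ρ.character g = 0 := by linear_combination hscale
  exact (mul_eq_zero.mp this).resolve_left (sub_ne_zero.mpr ha.symm)

/-- The dimension of the invariants is the average of the character, here `dim M / |G| ≠ 0`. -/
theorem invariants_ne_bot_of_character_eq_zero [FiniteDimensional k M] [Fintype G] [CharZero k]
    [Nontrivial M]
    (h : ∀ g : G, g ≠ 1 → ρ.character g = 0) : ρ.invariants ≠ ⊥ := by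
  let _ : Invertible (Nat.card G : k) := invertibleOfNonzero (Nat.cast_ne_zero.mpr Nat.card_pos.ne')
  have hdim := ρ.card_inv_mul_sum_char_eq_finrank
  rw [Fintype.sum_eq_single 1 h, char_one] at hdim
  intro hbot
  rw [hbot, finrank_bot] at hdim
  simp only [Nat.cast_zero, mul_eq_zero, inv_eq_zero, Nat.cast_eq_zero] at hdim
  exact hdim.elim Nat.card_pos.ne' Module.finrank_pos.ne'

end Representation

open Representation

theorem lies_over_lam_implies_lies_over_lamtilde_general
    {V : Type*} [Group V] [Fintype V]
    (Y Z : Subgroup V) (X : Set V)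
    (hZcent : Z ≤ Subgroup.center V)
    (lam : Z →* ℂˣ)
    -- `Ỹ` is a complement of `Y' = {y ∈ Y : λ([x,y]) = 1 ∀ x ∈ X}` in `Y`
    (Yt : Subgroup V) (hYtY : Yt ≤ Y)
    (hcompl₁ : ∀ y : V, y ∈ Yt →
      (y ∈ Y ∧ ∀ x ∈ X, ∀ (hc : x⁻¹ * y⁻¹ * x * y ∈ Z),
        lam ⟨x⁻¹ * y⁻¹ * x * y, hc⟩ = 1) → y = 1)
    -- `W₂` is the subgroup `ZỸ` of `V`, and `λ̃ : ZỸ → ℂˣ` satisfies `λ̃(z·ỹ) = λ(z)`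
    (W₂ : Subgroup V)
    (hW₂ : (W₂ : Set V) = (Z : Set V) * (Yt : Set V))
    (lamt : W₂ →* ℂˣ)
    (hlamt : ∀ (z yt : V) (hz : z ∈ Z) (hyt : yt ∈ Yt) (hm : z * yt ∈ W₂),
      lamt ⟨z * yt, hm⟩ = lam ⟨z, hz⟩)
    -- `(M, ρ)` is a finite-dimensional complex irreducible representation of `V`
    {M : Type*} [AddCommGroup M] [Module ℂ M] [FiniteDimensional ℂ M]
    (ρ : Representation ℂ V M)
    (hirr : ∀ U : Submodule ℂ M, (∀ g : V, ∀ m ∈ U, ρ g m ∈ U) → U = ⊥ ∨ U = ⊤)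
    -- there is a nonzero `w` with `ρ(z)·w = λ(z)·w` for all `z ∈ Z`
    (hw : ∃ w : M, w ≠ 0 ∧ ∀ (z : V) (hz : z ∈ Z),
      ρ z w = ((lam ⟨z, hz⟩ : ℂˣ) : ℂ) • w) :
    -- then there is a nonzero `w'` with `ρ(u)·w' = λ̃(u)·w'` for all `u ∈ ZỸ`
    ∃ w' : M, w' ≠ 0 ∧ ∀ (u : V) (hu : u ∈ W₂),
      ρ u w' = ((lamt ⟨u, hu⟩ : ℂˣ) : ℂ) • w' := by
  classical
  obtain ⟨w, hw0, hwZ⟩ := hw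
  have : Nontrivial M := nontrivial_of_ne w 0 hw0
  have hZ : ∀ z : Z, ∀ m : M, ρ z m = (lam z : ℂ) • m := fun z m =>
    (ρ.mem_weightSubmodule).mp ((ρ.weightSubmodule_eq_top hZcent hirr hw0
      ((ρ.mem_weightSubmodule).mpr fun z => hwZ z z.2)).symm ▸ Submodule.mem_top) z
  have hchar : ∀ y : Yt, y ≠ 1 → character (ρ.comp Yt.subtype) y = 0 := by
    intro y hy
    obtain ⟨x, -, hc, hne⟩ : ∃ x ∈ X, ∃ hc : x⁻¹ * (y : V)⁻¹ * x * y ∈ Z,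
        lam ⟨x⁻¹ * (y : V)⁻¹ * x * y, hc⟩ ≠ 1 := by
      by_contra! hall
      exact hy (Subtype.ext (hcompl₁ y y.2 ⟨hYtY y.2, hall⟩))
    exact ρ.character_eq_zero_of_commutator_eq_smul_one (x := x)
      (LinearMap.ext fun m => hZ ⟨_, hc⟩ m) (Units.val_eq_one.not.mpr hne)
  obtain ⟨w', hw'fix, hw'0⟩ :=
    Submodule.exists_mem_ne_zero_of_ne_bot (invariants_ne_bot_of_character_eq_zero (ρ.comp Yt.subtype) hchar)
  refine ⟨w', hw'0, fun u hu => ?_⟩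
  obtain ⟨z, hz, yt, hyt, rfl⟩ : u ∈ (Z : Set V) * (Yt : Set V) := hW₂ ▸ hu
  have hyt_fix : ρ yt w' = w' := hw'fix ⟨yt, hyt⟩
  rw [hlamt z yt hz hyt hu, map_mul, Module.End.mul_apply, hyt_fix, hZ ⟨z, hz⟩]

/-- Under the Setup with a complement `Ỹ` of `Y'` in `Y`: if `(W, ρ)` is
a finite-dimensional complex irreducible representation of `V` possessing a nonzero vector
`w` with `ρ(z)·w = λ(z)·w` for all `z ∈ Z`, then it possesses a nonzero vector `w'` with
`ρ(u)·w' = λ̃(u)·w'` for all `u ∈ ZỸ`.  (Every irreducible character of `V` lying over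
`λ` also lies over `λ̃`.) -/
theorem lies_over_lam_implies_lies_over_lamtilde
    {V : Type*} [Group V] [Fintype V]
    (H Y Z : Subgroup V) (X : Set V)
    (hXrep : ∀ v : V, ∃! p : ↥H × ↥X, (p.1 : V) * (p.2 : V) = v)
    (hZcent : Z ≤ Subgroup.center V)
    (hYH : Y ≤ H)
    (hYcent : ∀ y ∈ Y, ∀ h ∈ H, y * h = h * y)
    (hZY : Z ⊓ Y = ⊥)
    (lam : Z →* ℂˣ)
    (hXYZ : ∀ x ∈ X, ∀ y ∈ Y, x⁻¹ * y⁻¹ * x * y ∈ Z)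
    -- `Ỹ` is a complement of `Y' = {y ∈ Y : λ([x,y]) = 1 ∀ x ∈ X}` in `Y`
    (Yt : Subgroup V) (hYtY : Yt ≤ Y)
    (hcompl₁ : ∀ y : V, y ∈ Yt →
      (y ∈ Y ∧ ∀ x ∈ X, ∀ (hc : x⁻¹ * y⁻¹ * x * y ∈ Z),
        lam ⟨x⁻¹ * y⁻¹ * x * y, hc⟩ = 1) → y = 1)
    (hcompl₂ : ∀ y ∈ Y, ∃ y' : V,
      (y' ∈ Y ∧ ∀ x ∈ X, ∀ (hc : x⁻¹ * y'⁻¹ * x * y' ∈ Z),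
        lam ⟨x⁻¹ * y'⁻¹ * x * y', hc⟩ = 1) ∧ ∃ yt ∈ Yt, y = y' * yt)
    -- `W₂` is the subgroup `ZỸ` of `V`, and `λ̃ : ZỸ → ℂˣ` satisfies `λ̃(z·ỹ) = λ(z)`
    (W₂ : Subgroup V)
    (hW₂ : (W₂ : Set V) = (Z : Set V) * (Yt : Set V))
    (lamt : W₂ →* ℂˣ)
    (hlamt : ∀ (z yt : V) (hz : z ∈ Z) (hyt : yt ∈ Yt) (hm : z * yt ∈ W₂),
      lamt ⟨z * yt, hm⟩ = lam ⟨z, hz⟩)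
    -- `(M, ρ)` is a finite-dimensional complex irreducible representation of `V`
    {M : Type*} [AddCommGroup M] [Module ℂ M] [FiniteDimensional ℂ M]
    (ρ : Representation ℂ V M)
    (hMne : ∃ m : M, m ≠ 0)
    (hirr : ∀ U : Submodule ℂ M, (∀ g : V, ∀ m ∈ U, ρ g m ∈ U) → U = ⊥ ∨ U = ⊤)
    -- there is a nonzero `w` with `ρ(z)·w = λ(z)·w` for all `z ∈ Z`
    (hw : ∃ w : M, w ≠ 0 ∧ ∀ (z : V) (hz : z ∈ Z),
      ρ z w = ((lam ⟨z, hz⟩ : ℂˣ) : ℂ) • w) :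
    -- then there is a nonzero `w'` with `ρ(u)·w' = λ̃(u)·w'` for all `u ∈ ZỸ`
    ∃ w' : M, w' ≠ 0 ∧ ∀ (u : V) (hu : u ∈ W₂),
      ρ u w' = ((lamt ⟨u, hu⟩ : ℂˣ) : ℂ) • w' :=
  lies_over_lam_implies_lies_over_lamtilde_general Y Z X hZcent lam Yt hYtY hcompl₁ W₂ hW₂ lamt
    hlamt ρ hirr hw
end

section
/- Let q = 2^f with f a positive integer, F_q the finite field with q elements, and Tr : F_q → F_2 the trace map of the extension F_q/F_2. Let a, b ∈ F_q with a ≠ 0 and b ≠ 0. Then {s ∈ F_q : Tr(s·t·(b + a·t)) = 0 for all t ∈ F_q} = {0, a·b⁻²} and {t ∈ F_q : Tr(s·t·(b + a·t)) = 0 for all s ∈ F_q} = {0, b·a⁻¹}. -/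
/-!
Write `Tr` for the absolute trace. Since Frobenius is a Galois automorphism,
`Tr (x ^ 2) = Tr x`, so `Tr (s * t * (b + a * t))` equals
`Tr ((s * b * t) ^ 2 + s * a * t ^ 2) = Tr ((s ^ 2 * b ^ 2 + s * a) * t ^ 2)`.
As squaring is bijective and the trace form is nondegenerate, this vanishes for all `t` iff
`s * a = (s * b) ^ 2`. For the other set, `s * t * (b + a * t) = s * (t * (b + a * t))`, and
nondegeneracy alone gives `t * (b + a * t) = 0`.
-/

open Algebra

theorem Algebra.trace_pow_card (K L : Type*) [Field K] [Fintype K] [Field L] [Finite L]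
    [Algebra K L] (x : L) : trace K L (x ^ Fintype.card K) = trace K L x :=
  trace_eq_of_algEquiv (FiniteField.frobeniusAlgEquivOfAlgebraic K L) x

theorem Algebra.forall_trace_mul_eq_zero_iff {K L : Type*} [Field K] [Field L] [Algebra K L]
    [FiniteDimensional K L] [Algebra.IsSeparable K L] (y : L) :
    (∀ s : L, trace K L (s * y) = 0) ↔ y = 0 := by
  refine ⟨fun h => (traceForm_nondegenerate K L).1 y fun s => ?_, fun hy s => by simp [hy]⟩
  rw [traceForm_apply, mul_comm]
  exact h s

section CharTwo

variable {L : Type*} [Field L] [Finite L] [Algebra (ZMod 2) L]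

theorem trace_sq_eq_trace (x : L) : trace (ZMod 2) L (x ^ 2) = trace (ZMod 2) L x := by
  simpa only [ZMod.card] using trace_pow_card (ZMod 2) L x

theorem forall_trace_mul_add_mul_sq_eq_zero_iff (c d : L) :
    (∀ x : L, trace (ZMod 2) L (c * x + d * x ^ 2) = 0) ↔ d = c ^ 2 := by
  have : CharP L 2 := charP_of_injective_algebraMap' (ZMod 2) 2
  have h_quad (x : L) :
      trace (ZMod 2) L (c * x + d * x ^ 2) = trace (ZMod 2) L (x ^ 2 * (c ^ 2 + d)) := by
    rw [map_add, ← trace_sq_eq_trace (c * x), ← map_add]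
    congr 1
    ring
  calc (∀ x : L, trace (ZMod 2) L (c * x + d * x ^ 2) = 0)
      ↔ ∀ x : L, trace (ZMod 2) L (frobenius L 2 x * (c ^ 2 + d)) = 0 := by
        simp only [h_quad, frobenius_def]
    _ ↔ ∀ y : L, trace (ZMod 2) L (y * (c ^ 2 + d)) = 0 :=
      ((surjective_frobenius L 2).forall
        (p := fun y => trace (ZMod 2) L (y * (c ^ 2 + d)) = 0)).symm
    _ ↔ d = c ^ 2 := by rw [forall_trace_mul_eq_zero_iff, CharTwo.add_eq_zero, eq_comm]

end CharTwo

theorem quadratic_trace_zero_sets_char_two_general (f : ℕ)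
    (a b : GaloisField 2 f) (ha : a ≠ 0) (hb : b ≠ 0) :
    ({s : GaloisField 2 f |
        ∀ t : GaloisField 2 f,
          Algebra.trace (ZMod 2) (GaloisField 2 f) (s * t * (b + a * t)) = 0} =
      {0, a * (b ^ 2)⁻¹}) ∧
    ({t : GaloisField 2 f |
        ∀ s : GaloisField 2 f,
          Algebra.trace (ZMod 2) (GaloisField 2 f) (s * t * (b + a * t)) = 0} =
      {0, b * a⁻¹}) := by
  constructor
  · ext s
    have h_expand (t : GaloisField 2 f) : s * t * (b + a * t) = s * b * t + s * a * t ^ 2 := by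
      ring
    calc (∀ t, trace (ZMod 2) (GaloisField 2 f) (s * t * (b + a * t)) = 0)
        ↔ ∀ t, trace (ZMod 2) (GaloisField 2 f) (s * b * t + s * a * t ^ 2) = 0 := by
          simp only [h_expand]
      _ ↔ s * a = s * (s * b ^ 2) := by
          rw [forall_trace_mul_add_mul_sq_eq_zero_iff, mul_pow, sq s, mul_assoc]
      _ ↔ s = 0 ∨ s = a * (b ^ 2)⁻¹ := by
          rw [mul_eq_mul_left_iff, or_comm, eq_mul_inv_iff_mul_eq₀ (pow_ne_zero 2 hb),
            eq_comm (a := a)]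
  · ext t
    calc (∀ s, trace (ZMod 2) (GaloisField 2 f) (s * t * (b + a * t)) = 0)
        ↔ ∀ s, trace (ZMod 2) (GaloisField 2 f) (s * (t * (b + a * t))) = 0 := by
          simp only [mul_assoc]
      _ ↔ t * (b + a * t) = 0 := forall_trace_mul_eq_zero_iff _
      _ ↔ t = 0 ∨ t = b * a⁻¹ := by
          rw [mul_eq_zero, CharTwo.add_eq_zero, eq_mul_inv_iff_mul_eq₀ ha, mul_comm t a,
            eq_comm (a := b)]

/-- Let `q = 2^f` with `f` a positive integer, `F_q = GaloisField 2 f`,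
and `Tr : F_q → F_2` the trace map.  Let `a, b ∈ F_q` with `a ≠ 0` and `b ≠ 0`.  Then
`{s : Tr (s·t·(b + a·t)) = 0 for all t} = {0, a·b⁻²}` and
`{t : Tr (s·t·(b + a·t)) = 0 for all s} = {0, b·a⁻¹}`. -/
theorem quadratic_trace_zero_sets_char_two (f : ℕ) (hf : 0 < f)
    (a b : GaloisField 2 f) (ha : a ≠ 0) (hb : b ≠ 0) :
    ({s : GaloisField 2 f |
        ∀ t : GaloisField 2 f,
          Algebra.trace (ZMod 2) (GaloisField 2 f) (s * t * (b + a * t)) = 0} =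
      {0, a * (b ^ 2)⁻¹}) ∧
    ({t : GaloisField 2 f |
        ∀ s : GaloisField 2 f,
          Algebra.trace (ZMod 2) (GaloisField 2 f) (s * t * (b + a * t)) = 0} =
      {0, b * a⁻¹}) :=
  quadratic_trace_zero_sets_char_two_general f a b ha hb
end
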